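/- Let p, q, r, t ∈ ℝ with t > 0 and let θ ∈ ℝ with −π/3 < θ < π/3 (so that 2cosθ − 1 > 0). If α = (p+q+r)|t − e^{iθ}|² / (3(2cosθ − 1)), then D[α,p,q,r,t,θ] = f₁(t,θ)·T₁ − ((f₁(t,θ) − f₂(t,θ))/4)·T₂. -/

import Mathlib

/-! Both sides are polynomials in `S₁, S₂, S₃`. In `D` the coefficient of `S₃` is `f₁`, and the
coefficient of `S₂` is `α` times the quartic factor of `f₂`; writing `κ = |t - e^{iθ}|² / (2cos θ - 1)`,
so that `α = S₁κ/3` and `f₂ = κ · quartic`, these match the right-hand side. The remaining terms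
`-2α²(1 + cos 3θ)(α + S₁t)` are a multiple of `S₁³`, and matching them amounts to
`f₁ + 3f₂ = 2κ²(1 + cos 3θ)(3t + κ)`, which follows from `1 + cos 3θ = (1 + cos θ)(2cos θ - 1)²`
and `|t - e^{iθ}|² = t² - 2t cos θ + 1` by clearing the denominator. -/

open Complex Matrix

noncomputable def Dpoly (α p q r t θ : ℝ) : ℝ :=
  (p * q * r) * t ^ 6 + α * (p * q + q * r + r * p) * t ^ 4
    - 2 * (α * (p * q + q * r + r * p) + Real.cos (3 * θ) * (p * q * r)) * t ^ 3
    + α * (1 - 2 * Real.cos (3 * θ)) * (p * q + q * r + r * p) * t ^ 2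
    - 2 * α * (α * (p + q + r) + α * Real.cos (3 * θ) * (p + q + r)
        + (p * q + q * r + r * p)) * t
    + (p * q * r) + α * (p * q + q * r + r * p) - 2 * α ^ 3 * (1 + Real.cos (3 * θ))

noncomputable def T1 (p q r : ℝ) : ℝ :=
  -(4 / 27) * (p + q + r) ^ 3 + (1 / 3) * (p + q + r) * (p * q + q * r + r * p) + p * q * r

noncomputable def T2 (p q r : ℝ) : ℝ :=
  -(4 / 9) * (p + q + r) ^ 3 + (4 / 3) * (p + q + r) * (p * q + q * r + r * p)

noncomputable def f1 (t θ : ℝ) : ℝ := 1 - 2 * t ^ 3 * Real.cos (3 * θ) + t ^ 6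

noncomputable def f2 (t θ : ℝ) : ℝ :=
  Complex.normSq ((t : ℂ) - exp (θ * I)) *
    (1 - 2 * t + t ^ 2 - 2 * t ^ 3 + t ^ 4 - 2 * t ^ 2 * Real.cos (3 * θ)) /
    (2 * Real.cos θ - 1)

theorem normSq_ofReal_sub_exp_ofReal_mul_I (t θ : ℝ) :
    normSq ((t : ℂ) - exp (θ * I)) = t ^ 2 - 2 * t * Real.cos θ + 1 := by
  rw [exp_mul_I, ← ofReal_cos, ← ofReal_sin, normSq_apply]
  simp only [sub_re, sub_im, add_re, add_im, mul_re, mul_im, I_re, I_im, ofReal_re, ofReal_im]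
  linear_combination Real.sin_sq_add_cos_sq θ

theorem half_lt_cos_of_abs_lt {θ : ℝ} (hθ : |θ| < Real.pi / 3) : 1 / 2 < Real.cos θ := by
  rw [← Real.cos_abs, ← Real.cos_pi_div_three]
  exact Real.cos_lt_cos_of_nonneg_of_le_pi (abs_nonneg θ) (by linarith [Real.pi_pos]) hθ

theorem one_add_cos_three_mul (θ : ℝ) :
    1 + Real.cos (3 * θ) = (1 + Real.cos θ) * (2 * Real.cos θ - 1) ^ 2 := by
  rw [Real.cos_three_mul]; ring

noncomputable def f2Quartic (t θ : ℝ) : ℝ :=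
  1 - 2 * t + t ^ 2 - 2 * t ^ 3 + t ^ 4 - 2 * t ^ 2 * Real.cos (3 * θ)

noncomputable def kappa (t θ : ℝ) : ℝ :=
  normSq ((t : ℂ) - exp (θ * I)) / (2 * Real.cos θ - 1)

theorem Dpoly_eq_f1_add (α p q r t θ : ℝ) :
    Dpoly α p q r t θ = f1 t θ * (p * q * r) + α * f2Quartic t θ * (p * q + q * r + r * p)
      - 2 * α ^ 2 * (1 + Real.cos (3 * θ)) * (α + (p + q + r) * t) := by
  simp only [Dpoly, f1, f2Quartic]; ring

theorem f1_mul_T1_sub (p q r t θ : ℝ) :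
    f1 t θ * T1 p q r - ((f1 t θ - f2 t θ) / 4) * T2 p q r
      = f1 t θ * (p * q * r) + f2 t θ / 3 * (p + q + r) * (p * q + q * r + r * p)
        - (f1 t θ + 3 * f2 t θ) / 27 * (p + q + r) ^ 3 := by
  simp only [T1, T2]; ring

theorem f2_eq_kappa_mul (t θ : ℝ) : f2 t θ = kappa t θ * f2Quartic t θ := by
  simp only [f2, kappa, f2Quartic]; ring

theorem f1_add_three_mul_f2 {t θ : ℝ} (hθ : 2 * Real.cos θ - 1 ≠ 0) :
    f1 t θ + 3 * f2 t θ
      = 2 * kappa t θ ^ 2 * (1 + Real.cos (3 * θ)) * (3 * t + kappa t θ) := by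
  rw [f2_eq_kappa_mul, one_add_cos_three_mul]
  simp only [f1, f2Quartic, kappa, normSq_ofReal_sub_exp_ofReal_mul_I, Real.cos_three_mul]
  field_simp
  ring

theorem Dpoly_eq_general (p q r t θ α : ℝ)
    (hθl : -(Real.pi / 3) < θ) (hθr : θ < Real.pi / 3)
    (hα : α = (p + q + r) * Complex.normSq ((t : ℂ) - exp (θ * I)) /
        (3 * (2 * Real.cos θ - 1))) :
    Dpoly α p q r t θ = f1 t θ * T1 p q r - ((f1 t θ - f2 t θ) / 4) * T2 p q r := by
  have hc : 2 * Real.cos θ - 1 ≠ 0 := by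
    linarith [half_lt_cos_of_abs_lt (abs_lt.2 ⟨hθl, hθr⟩)]
  have hακ : α = (p + q + r) * kappa t θ / 3 := by
    rw [hα, kappa]; field_simp
  rw [Dpoly_eq_f1_add, f1_mul_T1_sub, hακ]
  linear_combination (p + q + r) ^ 3 / 27 * f1_add_three_mul_f2 (t := t) hc
    - (p + q + r) * (p * q + q * r + r * p) / 3 * f2_eq_kappa_mul t θ

/-- With `α = (p+q+r)|t-e^{iθ}|²/(3(2cosθ-1))`, one has
`D[α,p,q,r,t,θ] = f₁(t,θ)T₁ - ((f₁(t,θ)-f₂(t,θ))/4)T₂`. -/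
theorem Dpoly_eq (p q r t θ α : ℝ) (ht : 0 < t)
    (hθl : -(Real.pi / 3) < θ) (hθr : θ < Real.pi / 3)
    (hα : α = (p + q + r) * Complex.normSq ((t : ℂ) - exp (θ * I)) /
        (3 * (2 * Real.cos θ - 1))) :
    Dpoly α p q r t θ = f1 t θ * T1 p q r - ((f1 t θ - f2 t θ) / 4) * T2 p q r :=
  Dpoly_eq_general p q r t θ α hθl hθr hα
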